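/- Under the regularity conditions of the previous identity, the time-score-matching objective J(θ) = E_{t~U[0,1]} E_{p_t(x)}[λ(t)(∂_t log p_t(x) - s_θ(x,t))^2] equals, up to an additive constant independent of s_θ, the objective L(θ) = 2 E_{p_0}[λ(0) s_θ(x,0)] - 2 E_{p_1}[λ(1) s_θ(x,1)] + E_t E_{p_t}[2λ(t) ∂_t s_θ(x,t) + 2λ'(t) s_θ(x,t) + λ(t) s_θ(x,t)^2]. -/

import Mathlib

/-!
Expanding the square, `λ (ℓ' - s)² p - λ ℓ'² p - (2 λ ∂ₜs + 2 λ' s + λ s²) p` equals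
`-2 (λ ℓ' s p + λ ∂ₜs p + λ' s p)`, and since `∂ₜ p = p ∂ₜ log p = ℓ' p` this is exactly
`-2 ∂ₜ (λ s p)`. Integrating over `t ∈ [0, 1]` first (Fubini) and applying the fundamental
theorem of calculus for each fixed `x` leaves only the boundary terms at `t = 0` and `t = 1`.
-/

open MeasureTheory

theorem HasDerivAt.of_log {f : ℝ → ℝ} {l t : ℝ} (hf : ∀ᶠ u in nhds t, 0 < f u)
    (h : HasDerivAt (fun u => Real.log (f u)) l t) : HasDerivAt f (l * f t) t := by
  have hexp := h.exp
  rw [Real.exp_log hf.self_of_nhds, mul_comm] at hexp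
  exact hexp.congr_of_eventuallyEq (hf.mono fun u hu => (Real.exp_log hu).symm)

section ProdIcc

variable {α : Type*} [MeasurableSpace α] {ν : Measure α} [SFinite ν] {a b : ℝ}

theorem intervalIntegral_integral_eq_integral_prod (hab : a ≤ b) {f : ℝ → α → ℝ}
    (hf : Integrable (fun z : ℝ × α => f z.1 z.2) ((volume.restrict (Set.Icc a b)).prod ν)) :
    ∫ t in a..b, ∫ x, f t x ∂ν = ∫ z, f z.1 z.2 ∂((volume.restrict (Set.Icc a b)).prod ν) := by
  rw [intervalIntegral.integral_of_le hab, ← integral_Icc_eq_integral_Ioc,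
    integral_prod _ hf]

theorem integral_prod_Icc_eq_integral_sub_of_hasDerivAt (hab : a ≤ b) {G g : ℝ → α → ℝ}
    (hG : ∀ x, ∀ t ∈ Set.Icc a b, HasDerivAt (G · x) (g t x) t)
    (hg : Integrable (fun z : ℝ × α => g z.1 z.2) ((volume.restrict (Set.Icc a b)).prod ν)) :
    ∫ z, g z.1 z.2 ∂((volume.restrict (Set.Icc a b)).prod ν) = ∫ x, (G b x - G a x) ∂ν := by
  rw [integral_prod_symm _ hg]
  refine integral_congr_ae ?_
  filter_upwards [hg.prod_left_ae] with x hx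
  have hgx : IntervalIntegrable (g · x) volume a b :=
    (intervalIntegrable_iff_integrableOn_Icc_of_le hab).mpr hx
  have hftc := intervalIntegral.integral_eq_sub_of_hasDerivAt
    (fun t ht => hG x t (Set.uIcc_of_le hab ▸ ht)) hgx
  rwa [intervalIntegral.integral_of_le hab, ← integral_Icc_eq_integral_Ioc] at hftc

end ProdIcc

theorem stmt_8_general {D : ℕ}
    (p : ℝ → (Fin D → ℝ) → ℝ) (ℓ' : ℝ → (Fin D → ℝ) → ℝ)
    (s s' : (Fin D → ℝ) → ℝ → ℝ) (lam lam' : ℝ → ℝ)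
    (hppos : ∀ t x, 0 < p t x)
    (hℓ : ∀ x t, HasDerivAt (fun u => Real.log (p u x)) (ℓ' t x) t)
    (hssm : ∀ x t, HasDerivAt (fun u => s x u) (s' x t) t)
    (hlamsm : ∀ t, HasDerivAt lam (lam' t) t)
    (hintJ : Integrable
      (fun z : ℝ × (Fin D → ℝ) => lam z.1 * (ℓ' z.1 z.2 - s z.2 z.1)^2 * p z.1 z.2)
      ((volume.restrict (Set.Icc (0:ℝ) 1)).prod volume))
    (hintL : Integrable
      (fun z : ℝ × (Fin D → ℝ) =>
        (2 * lam z.1 * s' z.2 z.1 + 2 * lam' z.1 * s z.2 z.1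
          + lam z.1 * (s z.2 z.1)^2) * p z.1 z.2)
      ((volume.restrict (Set.Icc (0:ℝ) 1)).prod volume))
    (hintC : Integrable
      (fun z : ℝ × (Fin D → ℝ) => lam z.1 * (ℓ' z.1 z.2)^2 * p z.1 z.2)
      ((volume.restrict (Set.Icc (0:ℝ) 1)).prod volume))
    (hint0 : Integrable (fun x : Fin D → ℝ => lam 0 * s x 0 * p 0 x))
    (hint1 : Integrable (fun x : Fin D → ℝ => lam 1 * s x 1 * p 1 x)) :
    ∫ t in (0:ℝ)..1, ∫ x : Fin D → ℝ, lam t * (ℓ' t x - s x t)^2 * p t x =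
      ((2 * ∫ x : Fin D → ℝ, lam 0 * s x 0 * p 0 x)
        - (2 * ∫ x : Fin D → ℝ, lam 1 * s x 1 * p 1 x)
        + ∫ t in (0:ℝ)..1, ∫ x : Fin D → ℝ,
            (2 * lam t * s' x t + 2 * lam' t * s x t + lam t * (s x t)^2) * p t x)
      + ∫ t in (0:ℝ)..1, ∫ x : Fin D → ℝ, lam t * (ℓ' t x)^2 * p t x := by
  have hderiv : ∀ x, ∀ t ∈ Set.Icc (0:ℝ) 1,
      HasDerivAt (fun u => -2 * (lam u * s x u * p u x))
        (lam t * (ℓ' t x - s x t)^2 * p t x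
          - (2 * lam t * s' x t + 2 * lam' t * s x t + lam t * (s x t)^2) * p t x
          - lam t * (ℓ' t x)^2 * p t x) t := by
    intro x t _
    have hp := (hℓ x t).of_log (.of_forall (hppos · x))
    refine ((((hlamsm t).mul (hssm x t)).mul hp).const_mul (-2)).congr_deriv ?_
    simp only [Pi.mul_apply]
    ring
  have hboundary := integral_prod_Icc_eq_integral_sub_of_hasDerivAt zero_le_one hderiv
    ((hintJ.sub hintL).sub hintC)
  have hsplit := integral_sub (hintJ.sub hintL) hintC
  simp only [Pi.sub_apply] at hsplit
  rw [hsplit, integral_sub hintJ hintL, integral_sub (hint1.const_mul (-2)) (hint0.const_mul (-2)),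
    integral_const_mul, integral_const_mul] at hboundary
  rw [intervalIntegral_integral_eq_integral_prod zero_le_one hintJ,
    intervalIntegral_integral_eq_integral_prod zero_le_one hintL,
    intervalIntegral_integral_eq_integral_prod zero_le_one hintC]
  linarith

/-- The time-score-matching objective equals the tractable objective `L` plus a constant
(the expected squared true time score) independent of the model `s`. -/
theorem stmt_8 {D : ℕ}
    (p : ℝ → (Fin D → ℝ) → ℝ) (ℓ' : ℝ → (Fin D → ℝ) → ℝ)
    (s s' : (Fin D → ℝ) → ℝ → ℝ) (lam lam' : ℝ → ℝ)
    (hppos : ∀ t x, 0 < p t x)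
    (hℓ : ∀ x t, HasDerivAt (fun u => Real.log (p u x)) (ℓ' t x) t)
    (hssm : ∀ x t, HasDerivAt (fun u => s x u) (s' x t) t)
    (hlamsm : ∀ t, HasDerivAt lam (lam' t) t)
    (hlampos : ∀ t ∈ Set.Icc (0:ℝ) 1, 0 < lam t)
    (hdecay : ∀ t ∈ Set.Icc (0:ℝ) 1,
      Filter.Tendsto (fun x : Fin D → ℝ => lam t * p t x * s x t)
        (Filter.cocompact _) (nhds 0))
    (hintJ : Integrable
      (fun z : ℝ × (Fin D → ℝ) => lam z.1 * (ℓ' z.1 z.2 - s z.2 z.1)^2 * p z.1 z.2)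
      ((volume.restrict (Set.Icc (0:ℝ) 1)).prod volume))
    (hintL : Integrable
      (fun z : ℝ × (Fin D → ℝ) =>
        (2 * lam z.1 * s' z.2 z.1 + 2 * lam' z.1 * s z.2 z.1
          + lam z.1 * (s z.2 z.1)^2) * p z.1 z.2)
      ((volume.restrict (Set.Icc (0:ℝ) 1)).prod volume))
    (hintC : Integrable
      (fun z : ℝ × (Fin D → ℝ) => lam z.1 * (ℓ' z.1 z.2)^2 * p z.1 z.2)
      ((volume.restrict (Set.Icc (0:ℝ) 1)).prod volume))
    (hint0 : Integrable (fun x : Fin D → ℝ => lam 0 * s x 0 * p 0 x))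
    (hint1 : Integrable (fun x : Fin D → ℝ => lam 1 * s x 1 * p 1 x)) :
    ∫ t in (0:ℝ)..1, ∫ x : Fin D → ℝ, lam t * (ℓ' t x - s x t)^2 * p t x =
      ((2 * ∫ x : Fin D → ℝ, lam 0 * s x 0 * p 0 x)
        - (2 * ∫ x : Fin D → ℝ, lam 1 * s x 1 * p 1 x)
        + ∫ t in (0:ℝ)..1, ∫ x : Fin D → ℝ,
            (2 * lam t * s' x t + 2 * lam' t * s x t + lam t * (s x t)^2) * p t x)
      + ∫ t in (0:ℝ)..1, ∫ x : Fin D → ℝ, lam t * (ℓ' t x)^2 * p t x :=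
  stmt_8_general p ℓ' s s' lam lam' hppos hℓ hssm hlamsm hintJ hintL hintC hint0 hint1
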